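/- For every 0 ≤ a < 1 and 0 ≤ r ≤ 1/3, one has S_r(φ_a) = π · r²(1−a²)²/(1−a²r²)², and consequently S_r(φ_a)/(π − S_r(φ_a)) = (r²/(1−r²)) · (1−a²)²/(1−a⁴r²). -/

import Mathlib

open Metric

/-- The Möbius-type map `φ_a(z) = (z − a)/(1 − a z)`. -/
noncomputable def mobius (a : ℝ) : ℂ → ℂ := fun z => (z - (a : ℂ)) / (1 - (a : ℂ) * z)

/-- `S_r(f) = π Σ_{n≥1} n |aₙ|² r^{2n}`, written in terms of the Taylor coefficients
`c : ℕ → ℂ` of `f` (the `n = 0` term vanishes, so we may sum over all of `ℕ`). -/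
noncomputable def Sarea (c : ℕ → ℂ) (r : ℝ) : ℝ :=
  Real.pi * ∑' n : ℕ, (n : ℝ) * ‖c n‖ ^ 2 * r ^ (2 * n)

/-!
Taylor coefficients at `0` are unique, and expanding `1/(1 - a z)` geometrically gives
`φ_a(z) = -a + (1 - a²) ∑_{n ≥ 1} a^(n-1) zⁿ`. Hence `n |aₙ|² r^(2n) = (1 - a²)² r² · n x^(n-1)`
with `x = a² r²`, and `∑ n x^(n-1) = 1/(1 - x)²` gives `S_r(φ_a)`. The second formula then follows
from `(1 - a²r²)² - r²(1 - a²)² = (1 - r²)(1 - a⁴r²)`.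
-/

open FormalMultilinearSeries

section

variable {𝕜 : Type*} [NontriviallyNormedField 𝕜] {c d : ℕ → 𝕜} {f : 𝕜 → 𝕜} {ρ : ℝ}

theorem hasFPowerSeriesAt_ofScalars_of_hasSum (hρ : 0 < ρ)
    (hc : ∀ z ∈ ball (0 : 𝕜) ρ, HasSum (fun n => c n * z ^ n) (f z)) :
    HasFPowerSeriesAt f (ofScalars 𝕜 c) 0 := by
  obtain ⟨w, hw0, hwρ⟩ := NormedField.exists_norm_lt 𝕜 hρ
  refine ⟨‖w‖₊, ?_, by simpa using hw0, fun {y} hy => ?_⟩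
  · refine (ofScalars 𝕜 c).le_radius_of_tendsto (l := 0) ?_
    have := (hc w (mem_ball_zero_iff.2 hwρ)).summable.tendsto_atTop_zero.norm
    simpa only [norm_mul, norm_pow, ofScalars_norm, norm_zero, coe_nnnorm] using this
  · have hyw : ‖y‖ < ‖w‖ := by simpa using hy
    simpa only [zero_add, ofScalars_apply_eq, smul_eq_mul] using
      hc y (mem_ball_zero_iff.2 (hyw.trans hwρ))

theorem coeff_eq_of_hasSum_mul_pow (hρ : 0 < ρ)
    (hc : ∀ z ∈ ball (0 : 𝕜) ρ, HasSum (fun n => c n * z ^ n) (f z))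
    (hd : ∀ z ∈ ball (0 : 𝕜) ρ, HasSum (fun n => d n * z ^ n) (f z)) : c = d :=
  ofScalars_series_injective 𝕜 𝕜 <|
    (hasFPowerSeriesAt_ofScalars_of_hasSum hρ hc).eq_formalMultilinearSeries
      (hasFPowerSeriesAt_ofScalars_of_hasSum hρ hd)

end

noncomputable def mobiusCoeff (a : ℝ) : ℕ → ℂ
  | 0 => -a
  | n + 1 => ((1 - a ^ 2) * a ^ n : ℝ)

theorem hasSum_mobiusCoeff {a : ℝ} (ha : |a| < 1) {z : ℂ} (hz : ‖z‖ < 1) :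
    HasSum (fun n => mobiusCoeff a n * z ^ n) (mobius a z) := by
  have haz : ‖(a : ℂ) * z‖ < 1 := by
    rw [norm_mul, Complex.norm_real, Real.norm_eq_abs]
    nlinarith [norm_nonneg z, abs_nonneg a]
  have hne : 1 - (a : ℂ) * z ≠ 0 := sub_ne_zero.2 fun h => by simp [← h] at haz
  have hval : mobius a z = mobiusCoeff a 0 * z ^ 0 + (1 - (a : ℂ) ^ 2) * z * (1 - a * z)⁻¹ := by
    rw [mobius, div_eq_iff hne, add_mul, inv_mul_cancel_right₀ hne, mobiusCoeff]
    ring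
  rw [hval]
  refine HasSum.zero_add <|
    ((hasSum_geometric_of_norm_lt_one haz).mul_left ((1 - (a : ℂ) ^ 2) * z)).congr_fun fun n => ?_
  simp only [mobiusCoeff]
  push_cast
  ring

theorem norm_mobiusCoeff_succ_sq (a : ℝ) (n : ℕ) :
    ‖mobiusCoeff a (n + 1)‖ ^ 2 = (1 - a ^ 2) ^ 2 * (a ^ 2) ^ n := by
  rw [mobiusCoeff, Complex.norm_real, Real.norm_eq_abs, sq_abs]
  ring

theorem hasSum_area_mobiusCoeff {a r : ℝ} (h : a ^ 2 * r ^ 2 < 1) :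
    HasSum (fun n : ℕ => (n : ℝ) * ‖mobiusCoeff a n‖ ^ 2 * r ^ (2 * n))
      (r ^ 2 * (1 - a ^ 2) ^ 2 / (1 - a ^ 2 * r ^ 2) ^ 2) := by
  have hx : ‖a ^ 2 * r ^ 2‖ < 1 := by rwa [Real.norm_of_nonneg (by positivity)]
  have hsum := (hasSum_choose_mul_geometric_of_norm_lt_one 1 hx).mul_left (r ^ 2 * (1 - a ^ 2) ^ 2)
  have hval : r ^ 2 * (1 - a ^ 2) ^ 2 / (1 - a ^ 2 * r ^ 2) ^ 2 =
      (0 : ℕ) * ‖mobiusCoeff a 0‖ ^ 2 * r ^ (2 * 0) +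
        r ^ 2 * (1 - a ^ 2) ^ 2 * (1 / (1 - a ^ 2 * r ^ 2) ^ (1 + 1)) := by
    simp only [Nat.cast_zero, zero_mul, zero_add]
    ring
  rw [hval]
  refine HasSum.zero_add (hsum.congr_fun fun n => ?_)
  rw [norm_mobiusCoeff_succ_sq, Nat.choose_one_right]
  push_cast
  ring

theorem one_sub_area_mobius {a r : ℝ} (h : a ^ 2 * r ^ 2 ≠ 1) :
    1 - r ^ 2 * (1 - a ^ 2) ^ 2 / (1 - a ^ 2 * r ^ 2) ^ 2 =
      (1 - r ^ 2) * (1 - a ^ 4 * r ^ 2) / (1 - a ^ 2 * r ^ 2) ^ 2 := by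
  rw [one_sub_div (pow_ne_zero 2 (sub_ne_zero.2 h.symm))]
  ring

/-- For `0 ≤ a < 1` and `0 ≤ r ≤ 1/3`, one has
`S_r(φ_a) = π r²(1−a²)²/(1−a²r²)²` and consequently
`S_r(φ_a)/(π − S_r(φ_a)) = (r²/(1−r²)) (1−a²)²/(1−a⁴r²)`. -/
theorem Sarea_mobius (a : ℝ) (ha0 : 0 ≤ a) (ha1 : a < 1)
    (c : ℕ → ℂ)
    (hc : ∀ z ∈ ball (0 : ℂ) 1, HasSum (fun n : ℕ => c n * z ^ n) (mobius a z))
    (r : ℝ) (hr0 : 0 ≤ r) (hr : r ≤ 1 / 3) :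
    Sarea c r = Real.pi * (r ^ 2 * (1 - a ^ 2) ^ 2 / (1 - a ^ 2 * r ^ 2) ^ 2) ∧
    Sarea c r / (Real.pi - Sarea c r) =
      r ^ 2 / (1 - r ^ 2) * ((1 - a ^ 2) ^ 2 / (1 - a ^ 4 * r ^ 2)) := by
  have har : a ^ 2 * r ^ 2 < 1 := by
    have ha2 : a ^ 2 ≤ 1 := by nlinarith
    have hr2 : r ^ 2 < 1 := by nlinarith
    nlinarith [sq_nonneg r]
  have hS : Sarea c r = Real.pi * (r ^ 2 * (1 - a ^ 2) ^ 2 / (1 - a ^ 2 * r ^ 2) ^ 2) := by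
    have hcoeff : c = mobiusCoeff a := coeff_eq_of_hasSum_mul_pow one_pos hc fun z hz =>
      hasSum_mobiusCoeff (abs_lt.2 ⟨by linarith, ha1⟩) (mem_ball_zero_iff.1 hz)
    rw [hcoeff, Sarea, (hasSum_area_mobiusCoeff har).tsum_eq]
  refine ⟨hS, ?_⟩
  have hA : (1 - a ^ 2 * r ^ 2) ^ 2 ≠ 0 := pow_ne_zero 2 (sub_ne_zero.2 har.ne')
  rw [hS, ← mul_one_sub, mul_div_mul_left _ _ Real.pi_ne_zero, one_sub_area_mobius har.ne,
    div_div_div_cancel_right₀ hA, div_mul_div_comm]
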